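/- arXiv:1001.5417 — 2 statements merged into one kernel-verified Lean document; each statement's English description precedes it below -/
import Mathlib

section
/- Define g(t) := t(1+t²)^{1/2}(1+2t²) − ln(t + (1+t²)^{1/2}) for t ≥ 0. Then for all t ≥ 0: (3/5) t⁴ · min{(2/5)t, 1} ≤ g(t) − (8/3)t³ ≤ 2 t⁴ · min{(2/5)t, 1}. -/
noncomputable section

/-- The function `g` in Daubechies' kinetic energy bound. -/
def gDau (t : ℝ) : ℝ :=
  t * Real.sqrt (1 + t ^ 2) * (1 + 2 * t ^ 2) - Real.log (t + Real.sqrt (1 + t ^ 2))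

/-! Since `g(0) = 0` and `g'(t) = 8 t² √(1 + t²)`, the difference `g(t) - 8t³/3` has derivative
`8t² (√(1 + t²) - 1)`. Each bound is obtained by integrating an elementary estimate of `√(1 + x²)`:
`1 + 3x²/20 ≤ √(1 + x²) ≤ 1 + x²/2` for `x ≤ 5/2`, and `x ≤ √(1 + x²) ≤ 1 + x` for `x ≥ 0`. -/

open Set

theorem le_of_hasDerivAt_le_of_le {f f' B B' : ℝ → ℝ} {a b : ℝ}
    (hf : ∀ x, HasDerivAt f (f' x) x) (hB : ∀ x, HasDerivAt B (B' x) x) (ha : f a ≤ B a)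
    (hab : a ≤ b) (bound : ∀ x ∈ Ico a b, f' x ≤ B' x) : f b ≤ B b :=
  image_le_of_deriv_right_le_deriv_boundary
    (fun x _ ↦ (hf x).continuousAt.continuousWithinAt) (fun x _ ↦ (hf x).hasDerivWithinAt) ha
    (fun x _ ↦ (hB x).continuousAt.continuousWithinAt) (fun x _ ↦ (hB x).hasDerivWithinAt)
    bound ⟨hab, le_rfl⟩

theorem hasDerivAt_gDau (t : ℝ) :
    HasDerivAt gDau (8 * t ^ 2 * Real.sqrt (1 + t ^ 2)) t := by
  have hpos : (0 : ℝ) < 1 + t ^ 2 := by positivity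
  set s := Real.sqrt (1 + t ^ 2)
  have hs : s ^ 2 = 1 + t ^ 2 := Real.sq_sqrt hpos.le
  have hs_pos : 0 < s := Real.sqrt_pos.2 hpos
  have hts : 0 < t + s := by nlinarith
  have hsqrt : HasDerivAt (fun x ↦ Real.sqrt (1 + x ^ 2)) (1 / (2 * s) * (2 * t)) t :=
    (Real.hasDerivAt_sqrt hpos.ne').comp t (by simpa using (hasDerivAt_pow 2 t).const_add 1)
  have hquad : HasDerivAt (fun x : ℝ ↦ 1 + 2 * x ^ 2) (2 * (2 * t)) t := by
    simpa using ((hasDerivAt_pow 2 t).const_mul 2).const_add 1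
  have hprod : HasDerivAt (fun x ↦ x * Real.sqrt (1 + x ^ 2) * (1 + 2 * x ^ 2))
      ((1 * s + t * (1 / (2 * s) * (2 * t))) * (1 + 2 * t ^ 2) + t * s * (2 * (2 * t))) t :=
    ((hasDerivAt_id t).mul hsqrt).mul hquad
  have hlog : HasDerivAt (fun x ↦ Real.log (x + Real.sqrt (1 + x ^ 2)))
      ((1 + 1 / (2 * s) * (2 * t)) / (t + s)) t :=
    ((hasDerivAt_id t).add hsqrt).log hts.ne'
  refine (hprod.sub hlog).congr_deriv ?_
  field_simp
  linear_combination (t + s) * (1 - 2 * t ^ 2) * hs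

theorem hasDerivAt_gDau_sub_cube (t : ℝ) :
    HasDerivAt (fun x ↦ gDau x - 8 / 3 * x ^ 3) (8 * t ^ 2 * (Real.sqrt (1 + t ^ 2) - 1)) t :=
  ((hasDerivAt_gDau t).sub ((hasDerivAt_pow 3 t).const_mul (8 / 3))).congr_deriv (by ring)

theorem hasDerivAt_const_mul_pow (c : ℝ) (n : ℕ) (t : ℝ) :
    HasDerivAt (fun x ↦ c * x ^ n) (c * n * t ^ (n - 1)) t := by
  simpa only [mul_assoc] using (hasDerivAt_pow n t).const_mul c

theorem gDau_zero : gDau 0 = 0 := by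
  simp [gDau]

theorem gDau_sub_cube_le_pow_five {t : ℝ} (ht : 0 ≤ t) :
    gDau t - 8 / 3 * t ^ 3 ≤ 4 / 5 * t ^ 5 := by
  refine le_of_hasDerivAt_le_of_le hasDerivAt_gDau_sub_cube (hasDerivAt_const_mul_pow _ 5)
    (by simp [gDau_zero]) ht fun x _ ↦ ?_
  have : Real.sqrt (1 + x ^ 2) ≤ 1 + x ^ 2 / 2 :=
    Real.sqrt_le_iff.2 ⟨by positivity, by nlinarith [sq_nonneg x]⟩
  norm_num
  nlinarith [sq_nonneg x]

theorem gDau_sub_cube_le_pow_four {t : ℝ} (ht : 0 ≤ t) :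
    gDau t - 8 / 3 * t ^ 3 ≤ 2 * t ^ 4 := by
  refine le_of_hasDerivAt_le_of_le hasDerivAt_gDau_sub_cube (hasDerivAt_const_mul_pow _ 4)
    (by simp [gDau_zero]) ht fun x hx ↦ ?_
  have : Real.sqrt (1 + x ^ 2) ≤ 1 + x :=
    Real.sqrt_le_iff.2 ⟨by linarith [hx.1], by nlinarith [hx.1]⟩
  norm_num
  nlinarith [sq_nonneg x]

theorem pow_five_le_gDau_sub_cube {t : ℝ} (ht : 0 ≤ t) (ht' : t ≤ 5 / 2) :
    6 / 25 * t ^ 5 ≤ gDau t - 8 / 3 * t ^ 3 := by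
  refine le_of_hasDerivAt_le_of_le (hasDerivAt_const_mul_pow _ 5) hasDerivAt_gDau_sub_cube
    (by simp [gDau_zero]) ht fun x hx ↦ ?_
  have hx2 : x ^ 2 ≤ 25 / 4 := by nlinarith [hx.1, hx.2]
  have : 1 + 3 / 20 * x ^ 2 ≤ Real.sqrt (1 + x ^ 2) :=
    Real.le_sqrt_of_sq_le (by nlinarith [sq_nonneg x])
  norm_num
  nlinarith [sq_nonneg x]

theorem two_mul_pow_four_le_gDau {t : ℝ} (ht : 0 ≤ t) : 2 * t ^ 4 ≤ gDau t := by
  refine le_of_hasDerivAt_le_of_le (hasDerivAt_const_mul_pow _ 4) hasDerivAt_gDau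
    (by simp [gDau_zero]) ht fun x _ ↦ ?_
  have : x ≤ Real.sqrt (1 + x ^ 2) := Real.le_sqrt_of_sq_le (by linarith)
  norm_num
  nlinarith [sq_nonneg x]

/-- two-sided bound on `g(t) − (8/3)t³`. -/
theorem gDau_two_sided_bound (t : ℝ) (ht : 0 ≤ t) :
    3 / 5 * t ^ 4 * min (2 / 5 * t) 1 ≤ gDau t - 8 / 3 * t ^ 3 ∧
      gDau t - 8 / 3 * t ^ 3 ≤ 2 * t ^ 4 * min (2 / 5 * t) 1 := by
  rcases le_or_gt t (5 / 2) with hsmall | hlarge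
  · rw [min_eq_left (by linarith)]
    constructor
    · linarith [pow_five_le_gDau_sub_cube ht hsmall]
    · linarith [gDau_sub_cube_le_pow_five ht]
  · rw [min_eq_right (by linarith), mul_one, mul_one]
    have hcube : 0 ≤ t ^ 3 := by positivity
    constructor
    · nlinarith [two_mul_pow_four_le_gDau ht]
    · exact gDau_sub_cube_le_pow_four ht

end
end

section
/- Define K₂(t) := t ∫₀^∞ e^{−t√(s²+1)} s² ds for t > 0 (a modified Bessel function of the second kind). Let α > 0, r > 0 and 0 ≤ β₁ < β₂ < β₃ < β₄ ≤ ∞, and for 0 ≤ a < b ≤ ∞ write Σ_r(a,b) := {x ∈ ℝ³ : a r ≤ |x| ≤ b r} (with the upper constraint omitted when b = ∞). Then ∬_{x ∈ Σ_r(β₁,β₂), y ∈ Σ_r(β₃,β₄)} K₂(α⁻¹|x−y|)² dx dy ≤ ((4³π)²/3) · ((β₂³ − β₁³)/(β₃ − β₂)) · α⁴ r² e^{−α⁻¹ r (β₃ − β₂)}. -/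
open MeasureTheory

noncomputable section

abbrev R3 : Type := EuclideanSpace ℝ (Fin 3)

/-- The modified Bessel function `K₂` via its integral representation. -/
def K2 (t : ℝ) : ℝ := t * ∫ s in Set.Ioi (0 : ℝ), Real.exp (-t * Real.sqrt (s ^ 2 + 1)) * s ^ 2

/-! The bound `√(s² + 1) ≥ (1 + s) / 2` in the integral representation gives
`K₂(t) ≤ 16 t⁻² e^{-t/2}`. Points of the two annuli are at distance at least `d = r (β₃ - β₂)`,
so the integrand is at most `256 α⁴ |x - y|⁻⁴ e^{-d/α}` there. For fixed `x`, translation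
invariance and polar coordinates bound the `y`-integral by the integral of `|z|⁻⁴` over
`|z| ≥ d`, which is `4π / d`; the `x`-integral then contributes the volume
`4π r³ (β₂³ - β₁³) / 3` of the inner annulus. -/

open Set Metric Real Module

theorem half_one_add_le_sqrt_sq_add_one (s : ℝ) : (1 + s) / 2 ≤ √(s ^ 2 + 1) :=
  (le_abs_self _).trans (abs_le_sqrt (by nlinarith [sq_nonneg (3 * s - 1)]))

theorem integral_sq_mul_exp_neg_mul_Ioi {b : ℝ} (hb : 0 < b) :
    ∫ s in Ioi (0 : ℝ), s ^ 2 * exp (-(b * s)) = 2 / b ^ 3 := by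
  have hΓ : Gamma 3 = 2 := by
    rw [show (3 : ℝ) = (2 : ℕ) + 1 by norm_num, Gamma_nat_eq_factorial]; rfl
  have h := integral_rpow_mul_exp_neg_mul_Ioi three_pos hb
  rw [hΓ, show (3 : ℝ) - 1 = 2 by norm_num, show (3 : ℝ) = (3 : ℕ) by norm_num, rpow_natCast] at h
  simp only [rpow_two] at h
  rw [h]
  field_simp

theorem K2_nonneg {t : ℝ} (ht : 0 ≤ t) : 0 ≤ K2 t :=
  mul_nonneg ht (integral_nonneg fun _ => by positivity)

theorem K2_le {t : ℝ} (ht : 0 < t) : K2 t ≤ 16 / t ^ 2 * exp (-(t / 2)) := by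
  have hb : 0 < t / 2 := half_pos ht
  have hdom : ∀ s ∈ Ioi (0 : ℝ), exp (-t * √(s ^ 2 + 1)) * s ^ 2 ≤
      exp (-(t / 2)) * (s ^ 2 * exp (-(t / 2 * s))) := fun s _ => by
    have : -t * √(s ^ 2 + 1) ≤ -(t / 2) + -(t / 2 * s) := by
      nlinarith [half_one_add_le_sqrt_sq_add_one s]
    calc exp (-t * √(s ^ 2 + 1)) * s ^ 2 ≤ exp (-(t / 2) + -(t / 2 * s)) * s ^ 2 := by gcongr
      _ = _ := by rw [exp_add]; ring
  have hint : IntegrableOn (fun s => exp (-(t / 2)) * (s ^ 2 * exp (-(t / 2 * s)))) (Ioi 0) :=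
    (Integrable.of_integral_ne_zero
      (by rw [integral_sq_mul_exp_neg_mul_Ioi hb]; positivity)).const_mul _
  calc K2 t ≤ t * ∫ s in Ioi 0, exp (-(t / 2)) * (s ^ 2 * exp (-(t / 2 * s))) :=
        mul_le_mul_of_nonneg_left (integral_mono_of_nonneg (.of_forall fun _ => by positivity)
          hint ((ae_restrict_iff' measurableSet_Ioi).2 (.of_forall hdom))) ht.le
    _ = 16 / t ^ 2 * exp (-(t / 2)) := by
        rw [integral_const_mul, integral_sq_mul_exp_neg_mul_Ioi hb]
        field_simp
        ring

theorem K2_sq_le {t : ℝ} (ht : 0 < t) : K2 t ^ 2 ≤ 256 / t ^ 4 * exp (-t) :=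
  calc K2 t ^ 2 ≤ (16 / t ^ 2 * exp (-(t / 2))) ^ 2 :=
        pow_le_pow_left₀ (K2_nonneg ht.le) (K2_le ht) 2
    _ = 256 / t ^ 4 * exp (-t) := by rw [mul_pow, ← exp_nat_mul]; ring_nf

theorem K2_sq_inv_mul_le {α d t : ℝ} (hα : 0 < α) (hd : 0 < d) (hdt : d ≤ t) :
    K2 (α⁻¹ * t) ^ 2 ≤ 256 * α ^ 4 * exp (-(α⁻¹ * d)) * t ^ (-4 : ℝ) := by
  have ht : 0 < t := hd.trans_le hdt
  calc K2 (α⁻¹ * t) ^ 2 ≤ 256 / (α⁻¹ * t) ^ 4 * exp (-(α⁻¹ * t)) := K2_sq_le (by positivity)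
    _ ≤ 256 / (α⁻¹ * t) ^ 4 * exp (-(α⁻¹ * d)) := by gcongr
    _ = 256 * α ^ 4 * exp (-(α⁻¹ * d)) * t ^ (-4 : ℝ) := by
        rw [rpow_neg ht.le, show (4 : ℝ) = (4 : ℕ) by norm_num, rpow_natCast]
        field_simp

section Translation

variable {G : Type*} [MeasurableSpace G] [AddGroup G] [MeasurableAdd G] {μ : Measure G}
  [μ.IsAddRightInvariant]

theorem setIntegral_setIntegral_le_measureReal_mul_integral {A B : Set G} (hA : MeasurableSet A)
    (hμA : μ A ≠ ⊤) (hB : MeasurableSet B) {f : G → G → ℝ} {g : G → ℝ} (hf : ∀ x y, 0 ≤ f x y)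
    (hg : Integrable g μ) (hg₀ : ∀ z, 0 ≤ g z) (hfg : ∀ x ∈ A, ∀ y ∈ B, f x y ≤ g (y - x)) :
    ∫ x in A, ∫ y in B, f x y ∂μ ∂μ ≤ μ.real A * ∫ z, g z ∂μ := by
  have inner (x : G) (hx : x ∈ A) : ∫ y in B, f x y ∂μ ≤ ∫ z, g z ∂μ :=
    calc ∫ y in B, f x y ∂μ ≤ ∫ y in B, g (y - x) ∂μ :=
          integral_mono_of_nonneg (.of_forall (hf x)) (hg.comp_sub_right x).integrableOn
            ((ae_restrict_iff' hB).2 (.of_forall (hfg x hx)))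
      _ ≤ ∫ y, g (y - x) ∂μ :=
          setIntegral_le_integral (hg.comp_sub_right x) (.of_forall fun y => hg₀ (y - x))
      _ = ∫ z, g z ∂μ := integral_sub_right_eq_self g x
  calc ∫ x in A, ∫ y in B, f x y ∂μ ∂μ ≤ ∫ _ in A, ∫ z, g z ∂μ ∂μ :=
        integral_mono_of_nonneg (.of_forall fun x => integral_nonneg (hf x))
          (integrableOn_const hμA) ((ae_restrict_iff' hA).2 (.of_forall inner))
    _ = μ.real A * ∫ z, g z ∂μ := by rw [setIntegral_const, smul_eq_mul]

end Translation

section Radial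

variable {E : Type*} [NormedAddCommGroup E] [NormedSpace ℝ E] [FiniteDimensional ℝ E]
  [Nontrivial E] [MeasurableSpace E] [BorelSpace E] (μ : Measure E) [μ.IsAddHaarMeasure]

theorem measureReal_setOf_le_norm_le {a b : ℝ} (ha : 0 ≤ a) (hab : a ≤ b) :
    μ.real {x : E | a ≤ ‖x‖ ∧ ‖x‖ ≤ b} =
      μ.real (ball 0 1) * (b ^ finrank ℝ E - a ^ finrank ℝ E) := by
  have hAnn : {x : E | a ≤ ‖x‖ ∧ ‖x‖ ≤ b} = closedBall 0 b \ ball 0 a := by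
    ext x; simp [and_comm]
  have hsub : ball (0 : E) a ⊆ closedBall 0 b :=
    ball_subset_closedBall.trans (closedBall_subset_closedBall hab)
  rw [hAnn, measureReal_sdiff hsub measurableSet_ball measure_closedBall_lt_top.ne]
  simp only [Measure.real, Measure.addHaar_closedBall μ _ (ha.trans hab),
    Measure.addHaar_ball μ _ ha, ENNReal.toReal_mul, ENNReal.toReal_ofReal (pow_nonneg ha _),
    ENNReal.toReal_ofReal (pow_nonneg (ha.trans hab) _)]
  ring

theorem eqOn_pow_smul_indicator_Ici_rpow_neg {n : ℕ} (hn : 1 ≤ n) (d p : ℝ) :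
    EqOn (fun y : ℝ => y ^ (n - 1) • (Ici d).indicator (fun u => u ^ (-p)) y)
      ((Ici d).indicator fun y => y ^ ((n : ℝ) - 1 - p)) (Ioi 0) := by
  intro y (hy : 0 < y)
  by_cases hyd : y ∈ Ici d
  · simp only [indicator_of_mem hyd, smul_eq_mul]
    rw [← rpow_natCast, ← rpow_add hy, Nat.cast_sub hn, Nat.cast_one, sub_eq_add_neg _ p]
  · simp [hyd]

theorem integrable_indicator_Ici_rpow_neg_norm {d p : ℝ} (hd : 0 < d) (hp : finrank ℝ E < p) :
    Integrable (fun z : E => (Ici d).indicator (fun u => u ^ (-p)) ‖z‖) μ := by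
  rw [integrable_fun_norm_addHaar,
    integrableOn_congr_fun (eqOn_pow_smul_indicator_Ici_rpow_neg finrank_pos d p) measurableSet_Ioi]
  refine ((integrable_indicator_iff measurableSet_Ici).2 ?_).integrableOn
  exact (integrableOn_Ici_iff_integrableOn_Ioi (by simp)).2
    (integrableOn_Ioi_rpow_of_lt (by linarith) hd)

theorem integral_indicator_Ici_rpow_neg_norm {d p : ℝ} (hd : 0 < d) (hp : finrank ℝ E < p) :
    ∫ z, (Ici d).indicator (fun u => u ^ (-p)) ‖z‖ ∂μ =
      finrank ℝ E * μ.real (ball 0 1) * d ^ (finrank ℝ E - p) / (p - finrank ℝ E) := by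
  rw [integral_fun_norm_addHaar,
    setIntegral_congr_fun measurableSet_Ioi (eqOn_pow_smul_indicator_Ici_rpow_neg finrank_pos d p),
    setIntegral_indicator measurableSet_Ici, inter_eq_right.2 (Ici_subset_Ioi.2 hd),
    integral_Ici_eq_integral_Ioi, integral_Ioi_rpow_of_lt (by linarith) hd]
  have : p - finrank ℝ E ≠ 0 := by linarith
  rw [nsmul_eq_mul, smul_eq_mul, show (finrank ℝ E : ℝ) - 1 - p + 1 = -(p - finrank ℝ E) by ring]
  field_simp
  ring_nf

end Radial

theorem volume_real_ball_zero_one_fin_three :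
    volume.real (ball (0 : EuclideanSpace ℝ (Fin 3)) 1) = 4 / 3 * π := by
  simp only [Measure.real, EuclideanSpace.volume_ball_fin_three, ENNReal.ofReal_one, one_pow,
    one_mul]
  rw [ENNReal.toReal_ofReal (by positivity)]
  ring

theorem setIntegral_setIntegral_K2_sq_le {A B : Set R3} (hA : MeasurableSet A)
    (hμA : volume A ≠ ⊤) (hB : MeasurableSet B) {α d : ℝ} (hα : 0 < α) (hd : 0 < d)
    (hAB : ∀ x ∈ A, ∀ y ∈ B, d ≤ ‖y - x‖) :
    ∫ x in A, ∫ y in B, K2 (α⁻¹ * ‖x - y‖) ^ 2 ≤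
      volume.real A * (1024 * π * α ^ 4 * exp (-(α⁻¹ * d)) / d) := by
  have hp : (finrank ℝ R3 : ℝ) < 4 := by simp; norm_num
  have key := setIntegral_setIntegral_le_measureReal_mul_integral hA hμA hB
    (f := fun x y => K2 (α⁻¹ * ‖x - y‖) ^ 2)
    (g := fun z => 256 * α ^ 4 * exp (-(α⁻¹ * d)) * (Ici d).indicator (· ^ (-4 : ℝ)) ‖z‖)
    (fun _ _ => sq_nonneg _)
    ((integrable_indicator_Ici_rpow_neg_norm volume hd hp).const_mul _)
    (fun _ => mul_nonneg (by positivity)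
      (indicator_nonneg (fun u hu => rpow_nonneg (hd.le.trans hu) _) _))
    (fun x hx y hy => by
      rw [indicator_of_mem (mem_Ici.2 (hAB x hx y hy)), norm_sub_rev]
      exact K2_sq_inv_mul_le hα hd (hAB x hx y hy))
  rw [integral_const_mul, integral_indicator_Ici_rpow_neg_norm volume hd hp,
    finrank_euclideanSpace_fin, volume_real_ball_zero_one_fin_three] at key
  refine key.trans_eq (congrArg _ ?_)
  norm_num [rpow_neg_one]
  field_simp
  ring

theorem K2_annuli_estimate_general
    (α r : ℝ) (hα : 0 < α) (hr : 0 < r)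
    (β₁ β₂ β₃ : ℝ) (β₄ : EReal)
    (h1 : 0 ≤ β₁) (h12 : β₁ < β₂) (h23 : β₂ < β₃) :
    (∫ x in {x : R3 | β₁ * r ≤ ‖x‖ ∧ ‖x‖ ≤ β₂ * r},
        ∫ y in {y : R3 | β₃ * r ≤ ‖y‖ ∧ (‖y‖ : EReal) ≤ β₄ * (r : EReal)},
          K2 (α⁻¹ * ‖x - y‖) ^ 2) ≤
      (4 ^ 3 * Real.pi) ^ 2 / 3 * ((β₂ ^ 3 - β₁ ^ 3) / (β₃ - β₂)) * α ^ 4 * r ^ 2 *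
        Real.exp (-(α⁻¹ * r * (β₃ - β₂))) := by
  have hA : MeasurableSet {x : R3 | β₁ * r ≤ ‖x‖ ∧ ‖x‖ ≤ β₂ * r} :=
    (measurableSet_le measurable_const measurable_norm).inter
      (measurableSet_le measurable_norm measurable_const)
  have hμA : volume {x : R3 | β₁ * r ≤ ‖x‖ ∧ ‖x‖ ≤ β₂ * r} ≠ ⊤ :=
    measure_ne_top_of_subset (fun x hx => mem_closedBall_zero_iff.2 hx.2)
      measure_closedBall_lt_top.ne
  have hB : MeasurableSet {y : R3 | β₃ * r ≤ ‖y‖ ∧ (‖y‖ : EReal) ≤ β₄ * (r : EReal)} :=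
    (measurableSet_le measurable_const measurable_norm).inter
      ((measurable_coe_real_ereal.comp measurable_norm) measurableSet_Iic)
  have hd : 0 < r * (β₃ - β₂) := mul_pos hr (sub_pos.2 h23)
  have hsep : ∀ x ∈ {x : R3 | β₁ * r ≤ ‖x‖ ∧ ‖x‖ ≤ β₂ * r},
      ∀ y ∈ {y : R3 | β₃ * r ≤ ‖y‖ ∧ (‖y‖ : EReal) ≤ β₄ * (r : EReal)},
        r * (β₃ - β₂) ≤ ‖y - x‖ := fun x hx y hy => by
    linarith [norm_sub_norm_le y x, hx.2, hy.1]
  have hvol : volume.real {x : R3 | β₁ * r ≤ ‖x‖ ∧ ‖x‖ ≤ β₂ * r} =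
      4 / 3 * π * ((β₂ * r) ^ 3 - (β₁ * r) ^ 3) := by
    rw [measureReal_setOf_le_norm_le volume (by positivity) (by gcongr),
      finrank_euclideanSpace_fin, volume_real_ball_zero_one_fin_three]
  refine (setIntegral_setIntegral_K2_sq_le hA hμA hB hα hd hsep).trans_eq ?_
  rw [hvol, ← mul_assoc α⁻¹ r]
  field_simp
  ring

/-- exponential off-diagonal decay estimate for `K₂` integrated over two
separated annuli `Σ_r(β₁,β₂)` and `Σ_r(β₃,β₄)` (with `β₄ = ⊤` allowed). -/
theorem K2_annuli_estimate
    (α r : ℝ) (hα : 0 < α) (hr : 0 < r)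
    (β₁ β₂ β₃ : ℝ) (β₄ : EReal)
    (h1 : 0 ≤ β₁) (h12 : β₁ < β₂) (h23 : β₂ < β₃) (h34 : (β₃ : EReal) < β₄) :
    (∫ x in {x : R3 | β₁ * r ≤ ‖x‖ ∧ ‖x‖ ≤ β₂ * r},
        ∫ y in {y : R3 | β₃ * r ≤ ‖y‖ ∧ (‖y‖ : EReal) ≤ β₄ * (r : EReal)},
          K2 (α⁻¹ * ‖x - y‖) ^ 2) ≤
      (4 ^ 3 * Real.pi) ^ 2 / 3 * ((β₂ ^ 3 - β₁ ^ 3) / (β₃ - β₂)) * α ^ 4 * r ^ 2 *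
        Real.exp (-(α⁻¹ * r * (β₃ - β₂))) :=
  K2_annuli_estimate_general α r hα hr β₁ β₂ β₃ β₄ h1 h12 h23

end
end
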